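/- Let n ≥ 2, let x_1, …, x_n ∈ ℝ^d have mean x̄ and covariance matrix K with eigenvalues λ_1 ≥ … ≥ λ_d (with multiplicity), and let 1 ≤ k ≤ d. Then for every linear subspace W ⊆ ℝ^d with dim W = k, writing Π_W for the orthogonal projection onto W, the reconstruction error satisfies Σ_{i=1}^n ‖(x_i − x̄) − Π_W(x_i − x̄)‖² ≥ (n−1)·Σ_{j=k+1}^d λ_j, with equality when W is the span of k orthonormal eigenvectors of K corresponding to λ_1, …, λ_k. -/

import Mathlib

/-!
Write `y i = x i - xbar` and `q v = ∑ i, ⟪y i, v⟫ ^ 2 = (n - 1) ⟪v, K v⟫`. By Pythagoras and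
Parseval, the reconstruction error of a subspace `W` with orthonormal basis `e` is
`∑ j, q (u j) - ∑ l, q (e l) = (n - 1) (∑ j, λ j - ∑ l, ⟪e l, K e l⟫)`.
In the eigenbasis, `∑ l, ⟪e l, K e l⟫ = ∑ j, λ j p j` with weights `p j = ∑ l, ⟪e l, u j⟫ ^ 2`
in `[0, 1]` (Bessel) summing to `k` (Parseval), and such a weighted sum of the decreasing `λ j`
is at most `λ 0 + ⋯ + λ (k - 1)` (bathtub principle), with equality when the `e l` are
eigenvectors for the top `k` eigenvalues.
-/

open Matrix BigOperators Finset
open scoped RealInnerProductSpace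

theorem sum_mul_le_sum_of_threshold {ι : Type*} [Fintype ι] (A : Finset ι) (f p : ι → ℝ) (t : ℝ)
    (hA : ∀ j ∈ A, t ≤ f j) (hAc : ∀ j ∉ A, f j ≤ t)
    (hp0 : ∀ j, 0 ≤ p j) (hp1 : ∀ j, p j ≤ 1) (hp : ∑ j, p j = #A) :
    ∑ j, f j * p j ≤ ∑ j ∈ A, f j := by
  classical
  have key : ∀ j, f j * p j ≤ t * p j + if j ∈ A then f j - t else 0 := by
    intro j
    split_ifs with hj
    · nlinarith [hA j hj, hp1 j]
    · simpa using mul_le_mul_of_nonneg_right (hAc j hj) (hp0 j)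
  calc ∑ j, f j * p j ≤ ∑ j, (t * p j + if j ∈ A then f j - t else 0) :=
        sum_le_sum fun j _ => key j
    _ = ∑ j ∈ A, f j := by
      rw [sum_add_distrib, ← mul_sum, hp, sum_ite_mem, univ_inter, sum_sub_distrib, sum_const,
        nsmul_eq_mul]
      ring

theorem sum_mul_le_sum_filter_lt_of_antitone {d k : ℕ} (hkd : k ≤ d) {lam : Fin d → ℝ}
    (hlam : Antitone lam) (p : Fin d → ℝ) (hp0 : ∀ j, 0 ≤ p j) (hp1 : ∀ j, p j ≤ 1)
    (hp : ∑ j, p j = k) :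
    ∑ j, lam j * p j ≤ ∑ j ∈ univ.filter (fun j : Fin d => (j : ℕ) < k), lam j := by
  refine sum_mul_le_sum_of_threshold _ lam p (if h : k < d then lam ⟨k, h⟩ else ⨅ j, lam j)
    (fun j hj => ?_) (fun j hj => ?_) hp0 hp1 ?_
  · rw [mem_filter] at hj
    split_ifs with h
    · exact hlam (Fin.mk_le_mk.mpr hj.2.le)
    · exact ciInf_le (Finite.bddBelow_range lam) j
  · simp only [mem_filter, mem_univ, true_and, not_lt] at hj
    rw [dif_pos (by omega)]
    exact hlam (Fin.mk_le_mk.mpr hj)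
  · rw [hp, Fin.card_filter_val_lt, min_eq_right hkd]

section InnerProductSpace

variable {E : Type*} [NormedAddCommGroup E] [InnerProductSpace ℝ E]

theorem OrthonormalBasis.inner_map_self_eq_sum {ι : Type*} [Fintype ι]
    (u : OrthonormalBasis ι ℝ E) {T : E →ₗ[ℝ] E} {lam : ι → ℝ}
    (hT : ∀ j, T (u j) = lam j • u j) (v : E) :
    ⟪v, T v⟫ = ∑ j, lam j * ⟪u j, v⟫ ^ 2 := by
  have hTv : T v = ∑ j, (lam j * ⟪u j, v⟫) • u j := by
    conv_lhs => rw [← u.sum_repr' v]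
    simp only [map_sum, map_smul, hT, smul_smul, mul_comm]
  rw [hTv, inner_sum]
  refine sum_congr rfl fun j _ => ?_
  rw [real_inner_smul_right, real_inner_comm]
  ring

theorem OrthonormalBasis.sum_inner_map_le_sum_filter_lt {d k : ℕ} (hkd : k ≤ d)
    (u : OrthonormalBasis (Fin d) ℝ E) {T : E →ₗ[ℝ] E} {lam : Fin d → ℝ} (hlam : Antitone lam)
    (hT : ∀ j, T (u j) = lam j • u j) {e : Fin k → E} (he : Orthonormal ℝ e) :
    ∑ l, ⟪e l, T (e l)⟫ ≤ ∑ j ∈ univ.filter (fun j : Fin d => (j : ℕ) < k), lam j := by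
  have hweights : ∑ l, ⟪e l, T (e l)⟫ = ∑ j, lam j * ∑ l, ⟪e l, u j⟫ ^ 2 := by
    simp_rw [u.inner_map_self_eq_sum hT, mul_sum]
    rw [sum_comm]
    simp_rw [real_inner_comm (e _)]
  rw [hweights]
  refine sum_mul_le_sum_filter_lt_of_antitone hkd hlam _
    (fun j => sum_nonneg fun l _ => sq_nonneg _) (fun j => ?_) ?_
  · simpa [u.orthonormal.1 j] using he.sum_inner_products_le (u j) (s := univ)
  · rw [sum_comm]
    simp_rw [u.sum_sq_inner_left, he.1]
    simp

theorem OrthonormalBasis.norm_sub_orthogonalProjectionOnto_sq {κ : Type*} [Fintype κ]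
    {W : Submodule ℝ E} [W.HasOrthogonalProjection] (e : OrthonormalBasis κ ℝ W) (z : E) :
    ‖z - W.orthogonalProjectionOnto z‖ ^ 2 = ‖z‖ ^ 2 - ∑ l, ⟪(e l : E), z⟫ ^ 2 := by
  have hpyth := W.norm_sq_eq_add_norm_sq_starProjection z
  rw [Submodule.starProjection_orthogonal_val] at hpyth
  have hproj : ‖W.starProjection z‖ ^ 2 = ∑ l, ⟪(e l : E), z⟫ ^ 2 := by
    change ‖W.orthogonalProjectionOnto z‖ ^ 2 = _
    simp_rw [← e.sum_sq_inner_right (W.orthogonalProjectionOnto z),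
      Submodule.inner_orthogonalProjectionOnto_eq_of_mem_left]
  rw [← Submodule.starProjection_apply]
  linarith

theorem OrthonormalBasis.sum_norm_sub_orthogonalProjectionOnto_sq {ι κ σ : Type*} [Fintype ι]
    [Fintype κ] [Fintype σ] (u : OrthonormalBasis ι ℝ E) {W : Submodule ℝ E}
    [W.HasOrthogonalProjection] (e : OrthonormalBasis κ ℝ W) {T : E →ₗ[ℝ] E} {c : ℝ} {y : σ → E}
    (hy : ∀ v, ∑ i, ⟪y i, v⟫ ^ 2 = c * ⟪v, T v⟫) :
    ∑ i, ‖y i - W.orthogonalProjectionOnto (y i)‖ ^ 2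
      = c * (∑ j, ⟪u j, T (u j)⟫ - ∑ l, ⟪(e l : E), T (e l)⟫) := by
  have htotal : ∑ i, ∑ j, ⟪u j, y i⟫ ^ 2 = c * ∑ j, ⟪u j, T (u j)⟫ := by
    rw [sum_comm, mul_sum]
    simp_rw [real_inner_comm (y _), hy]
  have hcaptured : ∑ i, ∑ l, ⟪(e l : E), y i⟫ ^ 2 = c * ∑ l, ⟪(e l : E), T (e l)⟫ := by
    rw [sum_comm, mul_sum]
    simp_rw [real_inner_comm (y _), hy]
  simp_rw [e.norm_sub_orthogonalProjectionOnto_sq, ← u.sum_sq_inner_right]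
  rw [sum_sub_distrib, htotal, hcaptured, mul_sub]

theorem Orthonormal.exists_orthonormalBasis_span {ι : Type*} [Fintype ι] {w : ι → E}
    (hw : Orthonormal ℝ w) :
    ∃ e : OrthonormalBasis ι ℝ (Submodule.span ℝ (Set.range w)), ∀ l, (e l : E) = w l :=
  ⟨(Module.Basis.span hw.linearIndependent).toOrthonormalBasis
      (funext (Module.Basis.span_apply hw.linearIndependent) ▸ orthonormal_span hw),
    by simp [Module.Basis.span_apply]⟩

end InnerProductSpace

theorem Fin.sum_castLE_eq_sum_filter_lt {M : Type*} [AddCommMonoid M] {k d : ℕ} (hkd : k ≤ d)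
    (f : Fin d → M) :
    ∑ l : Fin k, f (Fin.castLE hkd l) = ∑ j ∈ univ.filter (fun j : Fin d => (j : ℕ) < k), f j := by
  have himage : univ.map (Fin.castLEEmb hkd) = univ.filter (fun j : Fin d => (j : ℕ) < k) := by
    ext j
    simp only [mem_map, mem_univ, true_and, mem_filter, Fin.castLEEmb_apply]
    exact ⟨fun ⟨l, hl⟩ => hl ▸ l.isLt, fun hj => ⟨⟨j, hj⟩, rfl⟩⟩
  rw [← himage, sum_map]
  rfl

theorem sum_inner_sq_eq_mul_inner_toEuclideanLin {m σ : Type*} [Fintype m] [DecidableEq m]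
    [Fintype σ] {K : Matrix m m ℝ} {y : σ → EuclideanSpace ℝ m} {c : ℝ} (hc : c ≠ 0)
    (hK : ∀ a b, K a b = c⁻¹ * ∑ i, y i a * y i b) (v : EuclideanSpace ℝ m) :
    ∑ i, ⟪y i, v⟫ ^ 2 = c * ⟪v, toEuclideanLin K v⟫ := by
  simp only [PiLp.inner_apply, RCLike.inner_apply, Real.ringHom_apply, toLpLin_apply, mulVec,
    dotProduct, hK, sq, mul_sum, sum_mul]
  rw [sum_comm]
  refine sum_congr rfl fun b _ => ?_
  rw [sum_comm]
  exact sum_congr rfl fun a _ => sum_congr rfl fun i _ => by field_simp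

theorem pca_reconstruction_error_general
    (n d : ℕ) (hn : 2 ≤ n)
    (x : Fin n → EuclideanSpace ℝ (Fin d))
    (xbar : EuclideanSpace ℝ (Fin d))
    (K : Matrix (Fin d) (Fin d) ℝ)
    (hK : ∀ a b, K a b = ((n : ℝ) - 1)⁻¹ * ∑ i, (x i a - xbar a) * (x i b - xbar b))
    (lam : Fin d → ℝ) (hlam : Antitone lam)
    (u : Fin d → EuclideanSpace ℝ (Fin d))
    (hu_orth : Orthonormal ℝ u)
    (hu_eig : ∀ j, K.mulVec (u j) = lam j • u j)
    (k : ℕ) (hkd : k ≤ d) :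
    (∀ W : Submodule ℝ (EuclideanSpace ℝ (Fin d)), Module.finrank ℝ W = k →
      ((n : ℝ) - 1) * ∑ j ∈ Finset.univ.filter (fun j : Fin d => k ≤ (j : ℕ)), lam j
        ≤ ∑ i, ‖(x i - xbar) -
            (Submodule.orthogonalProjectionOnto W (x i - xbar) : EuclideanSpace ℝ (Fin d))‖ ^ 2) ∧
    (∀ w : Fin k → EuclideanSpace ℝ (Fin d), Orthonormal ℝ w →
      (∀ j : Fin k, K.mulVec (w j) = lam (Fin.castLE hkd j) • w j) →
      ∑ i, ‖(x i - xbar) -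
          (Submodule.orthogonalProjectionOnto (Submodule.span ℝ (Set.range w))
            (x i - xbar) : EuclideanSpace ℝ (Fin d))‖ ^ 2
        = ((n : ℝ) - 1) * ∑ j ∈ Finset.univ.filter (fun j : Fin d => k ≤ (j : ℕ)), lam j) := by
  have hc : 0 < (n : ℝ) - 1 := by
    have : (2 : ℝ) ≤ n := by exact_mod_cast hn
    linarith
  let ub : OrthonormalBasis (Fin d) ℝ (EuclideanSpace ℝ (Fin d)) :=
    .mk hu_orth (hu_orth.linearIndependent.span_eq_top_of_card_eq_finrank' (by simp)).ge
  have hTu : ∀ j, toEuclideanLin K (ub j) = lam j • ub j := fun j => by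
    simp [ub, toLpLin_apply, hu_eig]
  have hresidual : ∀ {W : Submodule ℝ (EuclideanSpace ℝ (Fin d))} {m : ℕ}
      (e : OrthonormalBasis (Fin m) ℝ W),
      ∑ i, ‖(x i - xbar) - (W.orthogonalProjectionOnto (x i - xbar) : EuclideanSpace ℝ (Fin d))‖ ^ 2
        = ((n : ℝ) - 1) *
          (∑ j, lam j - ∑ l, ⟪(e l : EuclideanSpace ℝ (Fin d)), toEuclideanLin K (e l)⟫) := by
    intro W m e
    rw [ub.sum_norm_sub_orthogonalProjectionOnto_sq e
      (sum_inner_sq_eq_mul_inner_toEuclideanLin (K := K) hc.ne' fun a b => by rw [hK]; simp)]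
    congr 2
    exact sum_congr rfl fun j _ => by simp [hTu, real_inner_smul_right]
  have htail : ∑ j, lam j - ∑ j ∈ univ.filter (fun j : Fin d => (j : ℕ) < k), lam j
      = ∑ j ∈ univ.filter (fun j : Fin d => k ≤ (j : ℕ)), lam j := by
    rw [← sum_filter_add_sum_filter_not univ (fun j : Fin d => (j : ℕ) < k)]
    simp [not_lt]
  constructor
  · rintro W rfl
    rw [hresidual (stdOrthonormalBasis ℝ W), ← htail]
    gcongr
    exact ub.sum_inner_map_le_sum_filter_lt hkd hlam hTu
      ((stdOrthonormalBasis ℝ W).orthonormal.comp_linearIsometry W.subtypeₗᵢ)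
  · intro w hw hw_eig
    obtain ⟨e, he⟩ := hw.exists_orthonormalBasis_span
    have hTw : ∀ l, toEuclideanLin K (w l) = lam (Fin.castLE hkd l) • w l := fun l => by
      simp [toLpLin_apply, hw_eig]
    rw [hresidual e, ← htail]
    simp [he, hTw, real_inner_smul_right, hw.1 _, Fin.sum_castLE_eq_sum_filter_lt]

/-- Error-minimizing formulation of PCA optimality: for every `k`-dimensional subspace `W`
of `ℝ^d`, the reconstruction error satisfies
`Σᵢ ‖(xᵢ - x̄) - Π_W (xᵢ - x̄)‖² ≥ (n-1) · Σ_{j=k+1}^d λⱼ`, with equality when `W` is the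
span of `k` orthonormal eigenvectors of `K` corresponding to `λ₁, …, λ_k`. Here
`λ₁ ≥ ⋯ ≥ λ_d` are the eigenvalues of the covariance matrix `K`, listed with multiplicity
via an orthonormal eigenbasis `u`. -/
theorem pca_reconstruction_error
    (n d : ℕ) (hn : 2 ≤ n) (hd : 1 ≤ d)
    (x : Fin n → EuclideanSpace ℝ (Fin d))
    (xbar : EuclideanSpace ℝ (Fin d)) (hxbar : xbar = (n : ℝ)⁻¹ • ∑ i, x i)
    (K : Matrix (Fin d) (Fin d) ℝ)
    (hK : ∀ a b, K a b = ((n : ℝ) - 1)⁻¹ * ∑ i, (x i a - xbar a) * (x i b - xbar b))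
    (lam : Fin d → ℝ) (hlam : Antitone lam)
    (u : Fin d → EuclideanSpace ℝ (Fin d))
    (hu_orth : Orthonormal ℝ u)
    (hu_eig : ∀ j, K.mulVec (u j) = lam j • u j)
    (k : ℕ) (hk1 : 1 ≤ k) (hkd : k ≤ d) :
    (∀ W : Submodule ℝ (EuclideanSpace ℝ (Fin d)), Module.finrank ℝ W = k →
      ((n : ℝ) - 1) * ∑ j ∈ Finset.univ.filter (fun j : Fin d => k ≤ (j : ℕ)), lam j
        ≤ ∑ i, ‖(x i - xbar) -
            (Submodule.orthogonalProjectionOnto W (x i - xbar) : EuclideanSpace ℝ (Fin d))‖ ^ 2) ∧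
    (∀ w : Fin k → EuclideanSpace ℝ (Fin d), Orthonormal ℝ w →
      (∀ j : Fin k, K.mulVec (w j) = lam (Fin.castLE hkd j) • w j) →
      ∑ i, ‖(x i - xbar) -
          (Submodule.orthogonalProjectionOnto (Submodule.span ℝ (Set.range w))
            (x i - xbar) : EuclideanSpace ℝ (Fin d))‖ ^ 2
        = ((n : ℝ) - 1) * ∑ j ∈ Finset.univ.filter (fun j : Fin d => k ≤ (j : ℕ)), lam j) :=
  pca_reconstruction_error_general n d hn x xbar K hK lam hlam u hu_orth hu_eig k hkd
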